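/- Let α be an automorphism of a field F, let A be an α-symmetric V×V matrix over F, and let X ⊆ V be such that A[X] is nonsingular. Then the principal pivot transform A*X is α-symmetric. -/

import Mathlib

open Matrix
open scoped symmDiff

variable {V : Type} [Fintype V] [DecidableEq V] {F : Type} [Field F]

/-- principal submatrix of `A` indexed by `X` -/
def pSub (A : Matrix V V F) (X : Finset V) : Matrix X X F :=
  Matrix.of fun i j => A i.1 j.1

/-- principal pivot transform of `A` on `X` -/
noncomputable def ppt (A : Matrix V V F) (X : Finset V) : Matrix V V F :=
  let P : Matrix X X F := Matrix.of fun i j => A i.1 j.1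
  let Q : Matrix X {a // a ∉ X} F := Matrix.of fun i j => A i.1 j.1
  let R : Matrix {a // a ∉ X} X F := Matrix.of fun i j => A i.1 j.1
  let S : Matrix {a // a ∉ X} {a // a ∉ X} F := Matrix.of fun i j => A i.1 j.1
  fun i j =>
    if hi : i ∈ X then
      if hj : j ∈ X then P⁻¹ ⟨i, hi⟩ ⟨j, hj⟩
      else (-(P⁻¹ * Q)) ⟨i, hi⟩ ⟨j, hj⟩
    else
      if hj : j ∈ X then (R * P⁻¹) ⟨i, hi⟩ ⟨j, hj⟩
      else (S - R * P⁻¹ * Q) ⟨i, hi⟩ ⟨j, hj⟩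

/-! After splitting `V = X ⊔ (V \ X)`, `A*X` is the block pivot of `[P Q; R S]` on `P`. Both
`M ↦ -Mᵀ` and entrywise `α` commute with the block pivot, i.e. `-((A*X)ᵀ) = (-Aᵀ)*X` and
`α(A*X) = α(A)*X`, so for `α`-symmetric `A` we get `α(-((A*X)ᵀ)) = α(-Aᵀ)*X = A*X`. -/

namespace Matrix

variable {n : Type*} [Fintype n] [DecidableEq n]

protected theorem inv_neg {α : Type*} [CommRing α] (M : Matrix n n α) : (-M)⁻¹ = -M⁻¹ := by
  by_cases h : IsUnit M.det
  · exact inv_eq_right_inv (by rw [neg_mul_neg, mul_nonsing_inv M h])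
  · have h' : ¬IsUnit (-M).det := by
      rwa [det_neg, IsUnit.mul_iff, and_iff_right (isUnit_neg_one.pow _)]
    rw [nonsing_inv_apply_not_isUnit M h, nonsing_inv_apply_not_isUnit _ h', neg_zero]

theorem inv_map {K L G : Type*} [Field K] [Field L] [FunLike G K L] [RingHomClass G K L]
    (f : G) (M : Matrix n n K) : (M.map f)⁻¹ = M⁻¹.map f := by
  have hdet : (M.map f).det = f M.det := ((f : K →+* L).map_det M).symm
  have hadj : (M.map f).adjugate = M.adjugate.map f := ((f : K →+* L).map_adjugate M).symm
  rw [inv_def, inv_def, hdet, hadj, Ring.inverse_eq_inv', Ring.inverse_eq_inv', ← map_inv₀ f,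
    ← map_smul' f _ _ (map_mul f)]

end Matrix

/-- The pivot of the block matrix `[P Q; R S]` on its block `P`. -/
noncomputable def blockPivot {m n α : Type*} [Fintype m] [DecidableEq m] [CommRing α]
    (P : Matrix m m α) (Q : Matrix m n α) (R : Matrix n m α) (S : Matrix n n α) :
    Matrix (m ⊕ n) (m ⊕ n) α :=
  fromBlocks P⁻¹ (-(P⁻¹ * Q)) (R * P⁻¹) (S - R * P⁻¹ * Q)

section blockPivot

variable {m n : Type*} [Fintype m] [DecidableEq m]

theorem blockPivot_neg_transpose {α : Type*} [CommRing α] (P : Matrix m m α) (Q : Matrix m n α)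
    (R : Matrix n m α) (S : Matrix n n α) :
    blockPivot (-Pᵀ) (-Rᵀ) (-Qᵀ) (-Sᵀ) = -(blockPivot P Q R S)ᵀ := by
  simp only [blockPivot, fromBlocks_transpose, fromBlocks_neg, Matrix.inv_neg,
    ← transpose_nonsing_inv, transpose_mul, transpose_sub, transpose_neg, neg_neg,
    Matrix.mul_neg, Matrix.neg_mul, Matrix.mul_assoc, neg_sub', sub_neg_eq_add, neg_add_eq_sub]

theorem blockPivot_map {K L G : Type*} [Field K] [Field L] [FunLike G K L] [RingHomClass G K L]
    (f : G) (P : Matrix m m K) (Q : Matrix m n K) (R : Matrix n m K) (S : Matrix n n K) :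
    blockPivot (P.map f) (Q.map f) (R.map f) (S.map f) = (blockPivot P Q R S).map f := by
  simp only [blockPivot, fromBlocks_map, inv_map, Matrix.map_neg _ (map_neg f),
    Matrix.map_sub _ (map_sub f), Matrix.map_mul]

end blockPivot

section ppt

variable {ι : Type} [DecidableEq ι]

theorem ppt_eq_blockPivot {K : Type} [Field K] (A : Matrix ι ι K) (X : Finset ι) :
    ppt A X = (blockPivot
      (A.submatrix (Subtype.val : X → ι) (Subtype.val : X → ι))
      (A.submatrix (Subtype.val : X → ι) (Subtype.val : {a // a ∉ X} → ι))
      (A.submatrix (Subtype.val : {a // a ∉ X} → ι) (Subtype.val : X → ι))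
      (A.submatrix (Subtype.val : {a // a ∉ X} → ι) (Subtype.val : {a // a ∉ X} → ι))).submatrix
      (Equiv.sumCompl (· ∈ X)).symm (Equiv.sumCompl (· ∈ X)).symm := by
  ext i j
  by_cases hi : i ∈ X <;> by_cases hj : j ∈ X <;>
    simp only [ppt, submatrix_apply, hi, hj, dite_true, dite_false, not_false_eq_true,
      Equiv.sumCompl_symm_apply_of_pos, Equiv.sumCompl_symm_apply_of_neg] <;> rfl

theorem ppt_neg_transpose {K : Type} [Field K] (A : Matrix ι ι K) (X : Finset ι) :
    ppt (-Aᵀ) X = -(ppt A X)ᵀ := by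
  rw [ppt_eq_blockPivot, ppt_eq_blockPivot]
  show _ = (-(blockPivot _ _ _ _)ᵀ).submatrix _ _
  rw [← blockPivot_neg_transpose]
  rfl

theorem ppt_map {K L G : Type} [Field K] [Field L] [FunLike G K L] [RingHomClass G K L] (f : G)
    (A : Matrix ι ι K) (X : Finset ι) : ppt (A.map f) X = (ppt A X).map f := by
  simp only [ppt_eq_blockPivot, submatrix_map, blockPivot_map]

end ppt

theorem ppt_alphaSymm_general (A : Matrix V V F) (α : F ≃+* F) (X : Finset V)
    (hA : ∀ i j, α (-(Aᵀ i j)) = A i j) :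
    ∀ i j, α (-((ppt A X)ᵀ i j)) = ppt A X i j := by
  have hA' : (-Aᵀ).map α = A := Matrix.ext hA
  have hppt : (-(ppt A X)ᵀ).map α = ppt A X := by
    rw [← ppt_neg_transpose, ← ppt_map, hA']
  exact fun i j => congrFun₂ hppt i j

/-- the principal pivot transform of an α-symmetric matrix is
α-symmetric. -/
theorem ppt_alphaSymm (A : Matrix V V F) (α : F ≃+* F) (X : Finset V)
    (hA : ∀ i j, α (-(Aᵀ i j)) = A i j) (hX : (pSub A X).det ≠ 0) :
    ∀ i j, α (-((ppt A X)ᵀ i j)) = ppt A X i j :=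
  ppt_alphaSymm_general A α X hA
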